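/- Egalitarian ratio of leximin, lower bound: for n ≥ 1 and α ∈ (0,1), in any cake-sharing instance with n agents with piecewise uniform utilities, every leximin allocation A satisfies min_i ℓ(A∩W_i)/ℓ(W_i) ≥ α/(n − (n−1)α). -/

import Mathlib

open MeasureTheory

/-- The non-decreasing rearrangement of a vector. -/
noncomputable def sortVec {n : ℕ} (x : Fin n → ℝ) : Fin n → ℝ := x ∘ Tuple.sort x

/-- Leximin (weak) order: compare sorted vectors lexicographically. -/
noncomputable def leximinLE {n : ℕ} (x y : Fin n → ℝ) : Prop :=
  toLex (sortVec x) ≤ toLex (sortVec y)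

/-!
A leximin allocation admits no small exchange that raises a worst-off agent. Suppose agent `i`
gets `uᵢ < ℓ(Wᵢ)`. If `A` had unused length, adding a little of `Wᵢ \ A` would raise `i` and hurt
nobody, so `ℓ(A) = α`; as at most `1 - ℓ(Wᵢ)` of `A` lies outside `Wᵢ`, this gives
`uᵢ ≥ ℓ(Wᵢ) - (1 - α)`. If moreover `uᵢ < α/n`, the agents doing no better than `i` cannot cover
`A` (their pieces of `A` total at most `n uᵢ < α`), so `A` contains a positive amount of cake
desired by none of them; trading a tiny `δ` of it for `δ` of `Wᵢ \ A` raises `i` by `δ`, leaves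
the agents below `i` untouched and keeps those above `i` above `uᵢ + δ`, a leximin improvement.
Hence `uᵢ ≥ min (α/n) ℓ(Wᵢ)`, and the two lower bounds give the ratio by elementary algebra.
-/

open Finset Set Filter Topology

section Leximin

variable {n : ℕ}

lemma sortVec_le_iff {x : Fin n → ℝ} {k : Fin n} {a : ℝ} :
    sortVec x k ≤ a ↔ k < #{j | x j ≤ a} := by
  rw [sortVec, ← Tuple.lt_card_le_iff_apply_le_of_monotone (Tuple.monotone_sort x)]
  congr! 1
  exact card_equiv (Tuple.sort x) (by simp)

lemma sortVec_mono : Monotone (sortVec (n := n)) := fun u v huv k =>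
  sortVec_le_iff.2 <| (sortVec_le_iff.1 le_rfl).trans_le <|
    card_le_card fun j => by simpa using (huv j).trans

lemma sum_sortVec (x : Fin n → ℝ) : ∑ k, sortVec x k = ∑ k, x k :=
  Equiv.sum_comp (Tuple.sort x) x

lemma sortVec_strictMono : StrictMono (sortVec (n := n)) := fun u v huv => by
  refine (sortVec_mono huv.le).lt_of_ne fun heq => ?_
  obtain ⟨-, i, hi⟩ := Pi.lt_def.1 huv
  have := sum_lt_sum (fun j _ => huv.le j) ⟨i, mem_univ i, hi⟩
  rw [← sum_sortVec u, ← sum_sortVec v, heq] at this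
  exact this.false

lemma sortVec_min (x : Fin n → ℝ) (s : ℝ) :
    sortVec (fun j => min (x j) s) = fun k => min (sortVec x k) s :=
  Tuple.unique_monotone (Tuple.monotone_sort _)
    fun _ _ hab => min_le_min_right s (Tuple.monotone_sort x hab)

lemma Pi.toLex_lt_of_toLex_min_lt {ι β : Type*} [Preorder ι] [LinearOrder β] {x y : ι → β}
    (hx : Monotone x) {s : β}
    (h : toLex (fun k => min (x k) s) < toLex (fun k => min (y k) s)) : toLex x < toLex y := by
  obtain ⟨k, heq, hlt⟩ := h
  simp only [Pi.toLex_apply] at heq hlt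
  have hxk : x k < s := by grind
  refine ⟨k, fun j hj => ?_, show x k < y k by grind⟩
  have hxj : x j < s := (hx hj.le).trans_lt hxk
  have := heq j hj
  show x j = y j
  grind

lemma not_leximinLE_of_min_lt {u v : Fin n → ℝ} {s : ℝ}
    (h : (fun j => min (u j) s) < fun j => min (v j) s) : ¬ leximinLE v u := by
  have := Pi.toLex_strictMono (sortVec_strictMono h)
  simp only [sortVec_min] at this
  exact (Pi.toLex_lt_of_toLex_min_lt (Tuple.monotone_sort u) this).not_ge

end Leximin

lemma volume_ne_top_of_subset_Icc {a b : ℝ} {s : Set ℝ} (hs : s ⊆ Icc a b) : volume s ≠ ⊤ :=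
  ((measure_mono hs).trans_lt measure_Icc_lt_top).ne

lemma exists_subset_measureReal_eq {a b : ℝ} {s : Set ℝ} (hs : s ⊆ Icc a b)
    (hms : MeasurableSet s) {r : ℝ} (hr0 : 0 ≤ r) (hr : r ≤ volume.real s) :
    ∃ t ⊆ s, MeasurableSet t ∧ volume.real t = r := by
  set f : ℝ → ℝ := fun x => volume.real (s ∩ Iic x)
  have hfin : ∀ x, volume (s ∩ Iic x) ≠ ⊤ :=
    fun x => volume_ne_top_of_subset_Icc (inter_subset_left.trans hs)
  have hf : LipschitzWith 1 f := LipschitzWith.of_le_add fun x y =>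
    calc f x ≤ volume.real (s ∩ Iic y ∪ Ioc y x) :=
          measureReal_mono (fun z hz => (le_or_gt z y).imp (⟨hz.1, ·⟩) (⟨·, hz.2⟩))
            (measure_union_lt_top (hfin y).lt_top measure_Ioc_lt_top).ne
      _ ≤ f y + volume.real (Ioc y x) := measureReal_union_le _ _
      _ ≤ f y + dist x y := by
          rw [Real.volume_real_Ioc, Real.dist_eq]
          gcongr
          exact max_le (le_abs_self _) (abs_nonneg _)
  have hfa : f a = 0 :=
    measureReal_mono_null (s₂ := {a}) (fun z hz => le_antisymm hz.2 (hs hz.1).1)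
      (by simp [Measure.real]) (by simp)
  have hfb : f b = volume.real s := by
    simp only [f, inter_eq_left.2 (hs.trans Icc_subset_Iic_self)]
  obtain ⟨x, hx⟩ := intermediate_value_univ a b hf.continuous ⟨hfa ▸ hr0, hfb ▸ hr⟩
  exact ⟨s ∩ Iic x, inter_subset_left, hms.inter measurableSet_Iic, hx⟩

lemma exists_pos_le_forall_add_le_sub {ι : Type*} [Finite ι] (u : ι → ℝ) (x : ℝ) {a : ℝ}
    (ha : 0 < a) : ∃ δ, 0 < δ ∧ δ ≤ a ∧ ∀ j, x < u j → x + δ ≤ u j - δ := by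
  have hgap : ∀ j, ∀ᶠ δ in 𝓝 (0 : ℝ), x < u j → x + δ ≤ u j - δ := fun j => by
    by_cases hj : x < u j
    · filter_upwards [eventually_le_nhds (half_pos (sub_pos.2 hj))] with δ hδ _
      linarith
    · exact Eventually.of_forall fun _ h => absurd h hj
  obtain ⟨δ, ⟨hδa, hδ⟩, hδ0⟩ := (((eventually_le_nhds ha).and (eventually_all.2 hgap)).filter_mono
    nhdsWithin_le_nhds |>.and self_mem_nhdsWithin).exists (f := 𝓝[>] (0 : ℝ))
  exact ⟨δ, hδ0, hδa, hδ⟩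

section Cake

variable {n : ℕ} {α : ℝ} {W : Fin n → Set ℝ} {A : Set ℝ}

def IsLeximin (α : ℝ) (W : Fin n → Set ℝ) (A : Set ℝ) : Prop :=
  ∀ B ⊆ Icc (0 : ℝ) 1, MeasurableSet B → volume.real B ≤ α →
    leximinLE (fun j => volume.real (B ∩ W j)) (fun j => volume.real (A ∩ W j))

lemma IsLeximin.false_of_exchange (hlex : IsLeximin α W A) (hAsub : A ⊆ Icc 0 1)
    (hAmeas : MeasurableSet A) {i : Fin n} (hWsub : W i ⊆ Icc 0 1) (hWmeas : MeasurableSet (W i))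
    {D : Set ℝ} (hDA : D ⊆ A) (hDmeas : MeasurableSet D)
    (hDW : ∀ j, volume.real (A ∩ W j) ≤ volume.real (A ∩ W i) → Disjoint D (W j))
    {δ : ℝ} (hδ : 0 < δ) (hδW : δ ≤ volume.real (W i) - volume.real (A ∩ W i))
    (hD : volume.real D ≤ δ) (hlen : volume.real A - volume.real D + δ ≤ α)
    (hgap : ∀ j, volume.real (A ∩ W i) < volume.real (A ∩ W j) →
      volume.real (A ∩ W i) + δ ≤ volume.real (A ∩ W j) - δ) : False := by
  set u := fun j => volume.real (A ∩ W j)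
  have hfin {s : Set ℝ} (hs : s ⊆ Icc 0 1) : volume s ≠ ⊤ := volume_ne_top_of_subset_Icc hs
  have hWA : volume.real (W i \ A) = volume.real (W i) - u i := by
    rw [← measureReal_inter_add_sdiff hAmeas (hfin hWsub), inter_comm]
    ring
  obtain ⟨E, hEsub, hEmeas, hE⟩ := exists_subset_measureReal_eq (sdiff_subset.trans hWsub)
    (hWmeas.diff hAmeas) hδ.le (hWA ▸ hδW)
  set B := A \ D ∪ E
  have hBsub : B ⊆ Icc 0 1 :=
    union_subset (sdiff_subset.trans hAsub) (hEsub.trans (sdiff_subset.trans hWsub))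
  have hBlen : volume.real B ≤ α :=
    calc volume.real B ≤ volume.real (A \ D) + volume.real E := measureReal_union_le _ _
      _ = volume.real A - volume.real D + δ := by
          rw [measureReal_sdiff hDA hDmeas (hfin hAsub), hE]
      _ ≤ α := hlen
  have hloss (j : Fin n) : u j - δ ≤ volume.real (B ∩ W j) := by
    have : u j ≤ volume.real (B ∩ W j) + volume.real D :=
      calc u j ≤ volume.real (B ∩ W j ∪ D) := by
            refine measureReal_mono (fun x hx => ?_) (measure_union_lt_top
              (hfin (inter_subset_left.trans hBsub)).lt_top (hfin (hDA.trans hAsub)).lt_top).ne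
            by_cases hxD : x ∈ D
            · exact Or.inr hxD
            · exact Or.inl ⟨Or.inl ⟨hx.1, hxD⟩, hx.2⟩
        _ ≤ _ := measureReal_union_le _ _
    linarith
  have hAB (j : Fin n) (hj : u j ≤ u i) : A ∩ W j ⊆ B ∩ W j := fun x hx =>
    ⟨Or.inl ⟨hx.1, fun hxD => (hDW j hj).notMem_of_mem_left hxD hx.2⟩, hx.2⟩
  have hkeep (j : Fin n) (hj : u j ≤ u i) : u j ≤ volume.real (B ∩ W j) :=
    measureReal_mono (hAB j hj) (hfin (inter_subset_left.trans hBsub))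
  have hgain : u i + δ ≤ volume.real (B ∩ W i) :=
    calc u i + δ = volume.real (A ∩ W i ∪ E) := by
          rw [measureReal_union ((disjoint_sdiff_right.mono_right hEsub).mono_left
            inter_subset_left) hEmeas (hfin (inter_subset_left.trans hAsub))
            (hfin (hEsub.trans (sdiff_subset.trans hWsub))), hE]
      _ ≤ volume.real (B ∩ W i) :=
          measureReal_mono (union_subset (hAB i le_rfl) fun x hx => ⟨Or.inr hx, (hEsub hx).1⟩)
            (hfin (inter_subset_left.trans hBsub))
  -- capped at `u i + δ`, the utilities under `B` dominate those under `A`, strictly for `i`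
  refine not_leximinLE_of_min_lt (s := u i + δ) (Pi.lt_def.2 ⟨fun j => ?_, i, ?_⟩)
    (hlex B hBsub ((hAmeas.diff hDmeas).union hEmeas) hBlen)
  · rcases le_or_gt (u j) (u i) with hj | hj
    · exact min_le_min_right _ (hkeep j hj)
    · exact le_min ((min_le_right _ _).trans ((hgap j hj).trans (hloss j))) (min_le_right _ _)
  · rw [min_eq_right hgain, min_eq_left (le_add_of_nonneg_right hδ.le)]
    linarith

lemma IsLeximin.le_measureReal_of_measureReal_inter_lt (hlex : IsLeximin α W A)
    (hAsub : A ⊆ Icc 0 1) (hAmeas : MeasurableSet A) {i : Fin n} (hWsub : W i ⊆ Icc 0 1)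
    (hWmeas : MeasurableSet (W i)) (hi : volume.real (A ∩ W i) < volume.real (W i)) :
    α ≤ volume.real A := by
  by_contra! hA
  obtain ⟨δ, hδ, hδa, hgap⟩ := exists_pos_le_forall_add_le_sub (fun j => volume.real (A ∩ W j))
    (volume.real (A ∩ W i)) (lt_min (sub_pos.2 hA) (sub_pos.2 hi))
  refine hlex.false_of_exchange hAsub hAmeas hWsub hWmeas (empty_subset A)
    MeasurableSet.empty (fun j _ => empty_disjoint (W j)) hδ (hδa.trans (min_le_right _ _))
    (by simpa using hδ.le) ?_ hgap
  have := hδa.trans (min_le_left _ _)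
  simp only [measureReal_empty]
  linarith

lemma IsLeximin.min_le_measureReal_inter (hlex : IsLeximin α W A) (hAsub : A ⊆ Icc 0 1)
    (hAmeas : MeasurableSet A) (hAlen : volume.real A ≤ α) (hWsub : ∀ j, W j ⊆ Icc 0 1)
    (hWmeas : ∀ j, MeasurableSet (W j)) (i : Fin n) :
    min (α / n) (volume.real (W i)) ≤ volume.real (A ∩ W i) := by
  classical
  set u := fun j => volume.real (A ∩ W j)
  have hn : (0 : ℝ) < n := Nat.cast_pos.2 i.pos
  by_contra! hi
  obtain ⟨hiα, hiW⟩ := lt_min_iff.1 hi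
  set S : Finset (Fin n) := {j | u j ≤ u i}
  set U := ⋃ j ∈ S, W j
  have hUmeas : MeasurableSet U := S.measurableSet_biUnion fun j _ => hWmeas j
  rcases (measureReal_nonneg (μ := volume) (s := A \ U)).eq_or_lt with hAU | hAU
  · have : volume.real A < α :=
      calc volume.real A = volume.real (A ∩ U) := by
            rw [← measureReal_inter_add_sdiff hUmeas (volume_ne_top_of_subset_Icc hAsub), ← hAU,
              add_zero]
        _ ≤ ∑ j ∈ S, u j := by
            rw [inter_iUnion₂]
            exact measureReal_biUnion_finset_le _ _
        _ ≤ S.card • u i := sum_le_card_nsmul _ _ _ fun j hj => (Finset.mem_filter.1 hj).2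
        _ ≤ n * u i := by
            rw [nsmul_eq_mul]
            gcongr
            simpa using S.card_le_univ
        _ < n * (α / n) := by gcongr
        _ = α := by field_simp
    exact this.not_ge
      (hlex.le_measureReal_of_measureReal_inter_lt hAsub hAmeas (hWsub i) (hWmeas i) hiW)
  · obtain ⟨δ, hδ, hδa, hgap⟩ :=
      exists_pos_le_forall_add_le_sub u (u i) (lt_min hAU (sub_pos.2 hiW))
    obtain ⟨D, hDsub, hDmeas, hD⟩ := exists_subset_measureReal_eq (sdiff_subset.trans hAsub)
      (hAmeas.diff hUmeas) hδ.le (hδa.trans (min_le_left _ _))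
    exact hlex.false_of_exchange hAsub hAmeas (hWsub i) (hWmeas i) (hDsub.trans sdiff_subset)
      hDmeas
      (fun j hj => disjoint_of_subset_left hDsub (disjoint_sdiff_left.mono_right
        (subset_biUnion_of_mem (Finset.mem_filter.2 ⟨Finset.mem_univ j, hj⟩))))
      hδ (hδa.trans (min_le_right _ _)) hD.le (by linarith) hgap

lemma IsLeximin.sub_le_measureReal_inter (hlex : IsLeximin α W A) (hα : α ≤ 1)
    (hAsub : A ⊆ Icc 0 1) (hAmeas : MeasurableSet A) {i : Fin n} (hWsub : W i ⊆ Icc 0 1)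
    (hWmeas : MeasurableSet (W i)) :
    volume.real (W i) - (1 - α) ≤ volume.real (A ∩ W i) := by
  by_contra! hi
  have : volume.real A < α :=
    calc volume.real A ≤ volume.real (A ∩ W i ∪ Icc 0 1 \ W i) :=
          measureReal_mono (fun x hx => (em (x ∈ W i)).imp (⟨hx, ·⟩) (⟨hAsub hx, ·⟩))
            (volume_ne_top_of_subset_Icc
              (union_subset (inter_subset_left.trans hAsub) sdiff_subset))
      _ ≤ volume.real (A ∩ W i) + volume.real (Icc 0 1 \ W i) := measureReal_union_le _ _
      _ = volume.real (A ∩ W i) + (1 - volume.real (W i)) := by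
          rw [measureReal_sdiff hWsub hWmeas measure_Icc_lt_top.ne,
            Real.volume_real_Icc_of_le zero_le_one, sub_zero]
      _ < α := by linarith
  exact this.not_ge
    (hlex.le_measureReal_of_measureReal_inter_lt hAsub hAmeas hWsub hWmeas (by linarith))

end Cake

lemma div_le_div_of_min_le_of_sub_le {α n w u : ℝ} (hα0 : 0 < α) (hα1 : α ≤ 1) (hn : 0 < n)
    (hw : 0 < w) (hmin : min (α / n) w ≤ u) (hsub : w - (1 - α) ≤ u) :
    α / (n - (n - 1) * α) ≤ u / w := by
  have hden : 0 < n - (n - 1) * α := by nlinarith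
  rw [div_le_div_iff₀ hden hw]
  rcases le_total (α / n) w with h | h
  · rw [min_eq_left h] at hmin
    have : α * (1 - α) ≤ n * (1 - α) * u :=
      calc α * (1 - α) = n * (1 - α) * (α / n) := by field_simp
        _ ≤ n * (1 - α) * u := by gcongr
    nlinarith
  · rw [min_eq_right h] at hmin
    calc α * w ≤ (n - (n - 1) * α) * w := by gcongr; nlinarith
      _ ≤ u * (n - (n - 1) * α) := by rw [mul_comm]; gcongr

theorem leximin_egalitarian_ratio_lower_bound_general {n : ℕ}
    (α : ℝ) (hα : α ∈ Set.Ioo (0 : ℝ) 1)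
    (W : Fin n → Set ℝ) (hWsub : ∀ i, W i ⊆ Set.Icc 0 1)
    (hWmeas : ∀ i, MeasurableSet (W i))
    (hWpos : ∀ i, 0 < (volume (W i)).toReal)
    (A : Set ℝ) (hAsub : A ⊆ Set.Icc 0 1) (hAmeas : MeasurableSet A)
    (hAlen : (volume A).toReal ≤ α)
    (hlex : ∀ B : Set ℝ, B ⊆ Set.Icc 0 1 → MeasurableSet B → (volume B).toReal ≤ α →
      leximinLE (fun i => (volume (B ∩ W i)).toReal) (fun i => (volume (A ∩ W i)).toReal)) :
    ∀ i, α / (n - (n - 1) * α) ≤ (volume (A ∩ W i)).toReal / (volume (W i)).toReal := by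
  intro i
  have hlex : IsLeximin α W A := hlex
  exact div_le_div_of_min_le_of_sub_le hα.1 hα.2.le (Nat.cast_pos.2 i.pos) (hWpos i)
    (hlex.min_le_measureReal_inter hAsub hAmeas hAlen hWsub hWmeas i)
    (hlex.sub_le_measureReal_inter hα.2.le hAsub hAmeas (hWsub i) (hWmeas i))

/-- Egalitarian ratio of the leximin solution, lower bound: every leximin allocation `A`
satisfies `ℓ(A ∩ W i) / ℓ(W i) ≥ α / (n − (n−1)α)` for every agent `i`. -/
theorem leximin_egalitarian_ratio_lower_bound {n : ℕ} (hn : 1 ≤ n)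
    (α : ℝ) (hα : α ∈ Set.Ioo (0 : ℝ) 1)
    (W : Fin n → Set ℝ) (hWsub : ∀ i, W i ⊆ Set.Icc 0 1)
    (hWmeas : ∀ i, MeasurableSet (W i))
    (hWpos : ∀ i, 0 < (volume (W i)).toReal)
    (A : Set ℝ) (hAsub : A ⊆ Set.Icc 0 1) (hAmeas : MeasurableSet A)
    (hAlen : (volume A).toReal ≤ α)
    (hlex : ∀ B : Set ℝ, B ⊆ Set.Icc 0 1 → MeasurableSet B → (volume B).toReal ≤ α →
      leximinLE (fun i => (volume (B ∩ W i)).toReal) (fun i => (volume (A ∩ W i)).toReal)) :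
    ∀ i, α / (n - (n - 1) * α) ≤ (volume (A ∩ W i)).toReal / (volume (W i)).toReal :=
  leximin_egalitarian_ratio_lower_bound_general α hα W hWsub hWmeas hWpos A hAsub hAmeas hAlen hlex
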